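/- Over graph databases with alphabet Σ = {a} and a single register r, the RL sentence ∃π (∀λ ∀λ' ¬e1(π,λ,λ') ∧ ∀λ (λ ≠ ⊥̄ → e2(π,λ,λ))), where e1 := a*·(↓r. a^+[r^=])·a* and e2 := a*[r^=]·a*, holds in a graph database G if and only if G has a Hamiltonian path (a path that visits every node exactly once). Hence Hamiltonicity is expressible in RL. -/

import Mathlib

/-! # Common definitions: data graphs, paths, Turing machines, complexity classes -/

/-- A data graph: nodes `0, …, n-1`, a list of labeled edges `(source, label, target)`
(labels are natural numbers), and a list of data values (`data.getD v 0` is the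
data value of node `v`; data values are natural numbers, an infinite domain). -/
structure DataGraph where
  n : ℕ
  edges : List (ℕ × ℕ × ℕ)
  data : List ℕ
deriving DecidableEq

namespace DataGraph

/-- The data value of a node. -/
def val (G : DataGraph) (v : ℕ) : ℕ := G.data.getD v 0

/-- Well-formedness over the alphabet `{0, …, s-1}`. -/
def WF (G : DataGraph) (s : ℕ) : Prop :=
  (∀ e ∈ G.edges, e.1 < G.n ∧ e.2.1 < s ∧ e.2.2 < G.n) ∧ G.data.length = G.n

/-- Well-formedness, over an arbitrary finite alphabet of labels. -/
def WFAny (G : DataGraph) : Prop :=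
  (∀ e ∈ G.edges, e.1 < G.n ∧ e.2.2 < G.n) ∧ G.data.length = G.n

/-- A graph database: the data-value function is injective. -/
def IsDB (G : DataGraph) : Prop :=
  ∀ u v, u < G.n → v < G.n → G.val u = G.val v → u = v

/-- The set of data values occurring in `G`. -/
def dataVals (G : DataGraph) : Set ℕ := {d | ∃ v, v < G.n ∧ G.val v = d}

end DataGraph

/-- A raw path: a start node together with a list of steps (label, next node). -/
structure RawPath where
  start : ℕ
  steps : List (ℕ × ℕ)
deriving DecidableEq

namespace RawPath

/-- The sequence of nodes along a path. -/
def nodes (ρ : RawPath) : List ℕ := ρ.start :: ρ.steps.map Prod.snd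

/-- The final node of a path. -/
def last (ρ : RawPath) : ℕ := (ρ.steps.map Prod.snd).getLastD ρ.start

/-- The number of edges of the path; positions are `0, …, len`. -/
def len (ρ : RawPath) : ℕ := ρ.steps.length

/-- The node at position `i` (0-indexed). -/
def nodeAt (ρ : RawPath) (i : ℕ) : ℕ := ρ.nodes.getD i 0

/-- The label of the edge between positions `i` and `i+1`. -/
def labelAt (ρ : RawPath) (i : ℕ) : ℕ := (ρ.steps.map Prod.fst).getD i 0

/-- The label of a path: its sequence of edge labels. -/
def label (ρ : RawPath) : List ℕ := ρ.steps.map Prod.fst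

/-- Concatenation of two paths (meaningful when `ρ₁.last = ρ₂.start`). -/
def append (ρ₁ ρ₂ : RawPath) : RawPath := ⟨ρ₁.start, ρ₁.steps ++ ρ₂.steps⟩

end RawPath

/-- `ρ` is a path of the data graph `G`. -/
def DataGraph.IsPath (G : DataGraph) (ρ : RawPath) : Prop :=
  ρ.start < G.n ∧ ∀ i, i < ρ.steps.length →
    (ρ.nodeAt i, ρ.labelAt i, ρ.nodeAt (i + 1)) ∈ G.edges

/-- A concrete encoding of a data graph as a word over `ℕ`. -/
def encodeGraph (G : DataGraph) : List ℕ :=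
  G.n :: G.edges.length ::
    (((G.edges.map fun e => [e.1, e.2.1, e.2.2]).foldr (· ++ ·) []) ++
      G.data.length :: G.data)

/-! ## Turing machines and space-bounded computation -/

/-- A deterministic one-tape Turing machine; states and tape symbols coded by `ℕ`
(`0` is the blank symbol).  `δ q a = (q', a', d)`: new state, written symbol,
head direction (`true` = right). -/
structure TMach where
  q0 : ℕ
  qf : ℕ
  δ : ℕ → ℕ → ℕ × ℕ × Bool

namespace TMach

/-- One computation step on a configuration (state, head, tape). -/
def stepc (M : TMach) (c : ℕ × ℕ × List ℕ) : ℕ × ℕ × List ℕ :=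
  let out := M.δ c.1 (c.2.2.getD c.2.1 0)
  (out.1, (if out.2.2 then c.2.1 + 1 else c.2.1 - 1), c.2.2.set c.2.1 out.2.1)

/-- Initial configuration on input `w` with a tape of `m` cells. -/
def initConf (M : TMach) (w : List ℕ) (m : ℕ) : ℕ × ℕ × List ℕ :=
  (M.q0, 0, w ++ List.replicate (m - w.length) 0)

/-- `M` has an accepting run on input `w` using at most `m` tape cells. -/
def AcceptsWithin (M : TMach) (w : List ℕ) (m : ℕ) : Prop :=
  ∃ k : ℕ, ((M.stepc)^[k] (M.initConf w m)).1 = M.qf ∧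
    ∀ j, j ≤ k → ((M.stepc)^[j] (M.initConf w m)).2.1 < m

end TMach

/-- `tower k n`: a tower of exponentials of height `k`;
`tower 1 n = 2 ^ n` and `tower (k+1) n = 2 ^ tower k n`. -/
def tower : ℕ → ℕ → ℕ
  | 0, n => n
  | k + 1, n => 2 ^ tower k n

/-- A decision problem over words on the (infinite, ℕ-coded) alphabet. -/
abbrev Lang := Set (List ℕ)

/-- `L` is accepted in space `f`. -/
def AcceptedInSpace (f : ℕ → ℕ) (L : Lang) : Prop :=
  ∃ M : TMach, ∀ w, w ∈ L ↔ M.AcceptsWithin w (f w.length)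

/-- `k`-EXPSPACE: decidable in space `tower k (p(n))` for some polynomial `p`. -/
def InKExpSpace (k : ℕ) (L : Lang) : Prop :=
  ∃ P : Polynomial ℕ, AcceptedInSpace (fun n => tower k (P.eval n)) L

def InExpSpace (L : Lang) : Prop := InKExpSpace 1 L

def InPSpace (L : Lang) : Prop :=
  ∃ P : Polynomial ℕ, AcceptedInSpace (fun n => P.eval n) L

/-! ## Polynomial-time reductions (via Mathlib's TM2 model) -/

/-- A finite-alphabet encoding of `List ℕ`. -/
def listNatFinEncoding : Computability.Encoding (List ℕ) Bool where
  encode w := Computability.encodingNatBool.encode (Encodable.encode w)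
  decode l := (Computability.encodingNatBool.decode l).bind Encodable.decode
  decode_encode w := by
    rw [Computability.encodingNatBool.decode_encode]
    simp

/-- `f` is computable in polynomial time. -/
def PolyTimeFun (f : List ℕ → List ℕ) : Prop :=
  Nonempty (Turing.TM2ComputableInPolyTime listNatFinEncoding.encode listNatFinEncoding.encode f)

/-- Polynomial-time many-one reducibility. -/
def ReducesTo (L₁ L₂ : Lang) : Prop :=
  ∃ f : List ℕ → List ℕ, PolyTimeFun f ∧ ∀ w, w ∈ L₁ ↔ f w ∈ L₂

/-! ## Helpers for encodings -/

def encBlock (l : List ℕ) : List ℕ := l.length :: l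

def encListL {α : Type} (enc : α → List ℕ) (l : List α) : List ℕ :=
  l.length :: ((l.map fun x => encBlock (enc x)).foldr (· ++ ·) [])

def encPath (ρ : RawPath) : List ℕ :=
  ρ.start :: ρ.steps.length :: ((ρ.steps.map fun s => [s.1, s.2]).foldr (· ++ ·) [])
/-! ## Walk logic (WL) -/

/-- WL formulas over an ℕ-coded alphabet.  Path variables are naturals; a position
variable is a pair `(p, t)` where `p` is its sort (a path variable) and `t` an index. -/
inductive WL where
  | edge (a : ℕ) (p : ℕ) (t₁ t₂ : ℕ)        -- `E_a(t₁^p, t₂^p)`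
  | lt (p : ℕ) (t₁ t₂ : ℕ)                  -- `t₁^p < t₂^p`
  | sim (p₁ t₁ p₂ t₂ : ℕ)                   -- `t₁^{p₁} ∼ t₂^{p₂}`
  | not (φ : WL)
  | or (φ ψ : WL)
  | exPos (p t : ℕ) (φ : WL)                -- `∃ t^p`
  | exPath (p : ℕ) (φ : WL)                 -- `∃ p`

namespace WL

/-- Satisfaction of WL formulas in a data graph, under an assignment of paths to
path variables and of positions to position variables. -/
def Sat (G : DataGraph) : WL → (ℕ → RawPath) → (ℕ × ℕ → ℕ) → Prop
  | .edge a p t₁ t₂, αp, αt =>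
      αt (p, t₂) = αt (p, t₁) + 1 ∧ αt (p, t₁) < (αp p).len ∧
        (αp p).labelAt (αt (p, t₁)) = a
  | .lt p t₁ t₂, _, αt => αt (p, t₁) < αt (p, t₂)
  | .sim p₁ t₁ p₂ t₂, αp, αt =>
      G.val ((αp p₁).nodeAt (αt (p₁, t₁))) = G.val ((αp p₂).nodeAt (αt (p₂, t₂)))
  | .not φ, αp, αt => ¬ Sat G φ αp αt
  | .or φ ψ, αp, αt => Sat G φ αp αt ∨ Sat G ψ αp αt
  | .exPos p t φ, αp, αt =>
      ∃ i, i ≤ (αp p).len ∧ Sat G φ αp (Function.update αt (p, t) i)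
  | .exPath p φ, αp, αt => ∃ ρ, G.IsPath ρ ∧ Sat G φ (Function.update αp p ρ) αt

/-- Truth of a Boolean (closed) WL formula in `G`. -/
def holds (G : DataGraph) (φ : WL) : Prop :=
  Sat G φ (fun _ => ⟨0, []⟩) (fun _ => 0)

/-- Free position variables. -/
def freePos : WL → Finset (ℕ × ℕ)
  | .edge _ p t₁ t₂ => {(p, t₁), (p, t₂)}
  | .lt p t₁ t₂ => {(p, t₁), (p, t₂)}
  | .sim p₁ t₁ p₂ t₂ => {(p₁, t₁), (p₂, t₂)}
  | .not φ => freePos φ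
  | .or φ ψ => freePos φ ∪ freePos ψ
  | .exPos p t φ => (freePos φ).erase (p, t)
  | .exPath p φ => (freePos φ).filter (fun v => v.1 ≠ p)

/-- Free path variables. -/
def freePath : WL → Finset ℕ
  | .edge _ p _ _ => {p}
  | .lt p _ _ => {p}
  | .sim p₁ _ p₂ _ => {p₁, p₂}
  | .not φ => freePath φ
  | .or φ ψ => freePath φ ∪ freePath ψ
  | .exPos p _ φ => insert p (freePath φ)
  | .exPath p φ => (freePath φ).erase p

/-- A Boolean WL formula: no free variables. -/
def Closed (φ : WL) : Prop := freePos φ = ∅ ∧ freePath φ = ∅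

/-- Labels appearing in a WL formula (its alphabet). -/
def labels : WL → Finset ℕ
  | .edge a _ _ _ => {a}
  | .lt _ _ _ => ∅
  | .sim _ _ _ _ => ∅
  | .not φ => labels φ
  | .or φ ψ => labels φ ∪ labels ψ
  | .exPos _ _ φ => labels φ
  | .exPath _ φ => labels φ

/-- The formula contains no path quantification. -/
def NoPathQuant : WL → Prop
  | .not φ => NoPathQuant φ
  | .or φ ψ => NoPathQuant φ ∧ NoPathQuant ψ
  | .exPos _ _ φ => NoPathQuant φ
  | .exPath _ _ => False
  | _ => True

/-- All position variables of the formula are of sort `p`. -/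
def OnlySort (p : ℕ) : WL → Prop
  | .edge _ q _ _ => q = p
  | .lt q _ _ => q = p
  | .sim q₁ _ q₂ _ => q₁ = p ∧ q₂ = p
  | .not φ => OnlySort p φ
  | .or φ ψ => OnlySort p φ ∧ OnlySort p ψ
  | .exPos q _ φ => q = p ∧ OnlySort p φ
  | .exPath _ φ => OnlySort p φ

end WL

/-- The evaluation problem `Eval(WL, φ)` for a fixed Boolean WL formula `φ` over the
alphabet `{0, …, s-1}`, as a language of encodings of data graphs. -/
def evalWL (s : ℕ) (φ : WL) : Lang :=
  {w | ∃ G : DataGraph, w = encodeGraph G ∧ G.WF s ∧ WL.holds G φ}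
/-! ## Regular expressions with memory (REM) and register logic (RL) -/

/-- Conditions over registers (registers are ℕ-indexed). -/
inductive RCond where
  | eq (i : ℕ)                       -- `r_i^=`
  | and (c₁ c₂ : RCond)
  | not (c : RCond)

/-- A register assignment: `none` is `⊥`. -/
abbrev RAsg := ℕ → Option ℕ

def botAsg : RAsg := fun _ => none

/-- Satisfaction of a condition by the current data value `d` and registers `lam`. -/
def RCond.CSat (d : ℕ) (lam : RAsg) : RCond → Prop
  | .eq i => lam i = some d
  | .and c₁ c₂ => RCond.CSat d lam c₁ ∧ RCond.CSat d lam c₂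
  | .not c => ¬ RCond.CSat d lam c

/-- Registers mentioned in a condition. -/
def RCond.regs : RCond → Finset ℕ
  | .eq i => {i}
  | .and c₁ c₂ => c₁.regs ∪ c₂.regs
  | .not c => c.regs

/-- Regular expressions with memory over an ℕ-coded alphabet and ℕ-indexed registers. -/
inductive REM where
  | eps
  | lab (a : ℕ)
  | union (e₁ e₂ : REM)
  | concat (e₁ e₂ : REM)
  | plus (e : REM)
  | test (e : REM) (c : RCond)       -- `e[c]`
  | store (rs : List ℕ) (e : REM)    -- `↓r̄. e`

/-- `e* := ε ∪ e⁺`. -/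
def REM.star (e : REM) : REM := .union .eps (.plus e)

def setRegs (lam : RAsg) (rs : List ℕ) (d : ℕ) : RAsg :=
  fun i => if i ∈ rs then some d else lam i

/-- Semantics of REMs: `REMSem G e ρ lam lam'` holds iff the path `ρ` (from `ρ.start` to
`ρ.last`) can be parsed according to `e`, transforming register assignment `lam`
into `lam'`. -/
inductive REMSem (G : DataGraph) : REM → RawPath → RAsg → RAsg → Prop
  | eps (u : ℕ) (hu : u < G.n) (lam : RAsg) : REMSem G .eps ⟨u, []⟩ lam lam
  | lab (u a v : ℕ) (h : (u, a, v) ∈ G.edges) (lam : RAsg) :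
      REMSem G (.lab a) ⟨u, [(a, v)]⟩ lam lam
  | unionL {e₁ e₂ ρ lam lam'} : REMSem G e₁ ρ lam lam' → REMSem G (.union e₁ e₂) ρ lam lam'
  | unionR {e₁ e₂ ρ lam lam'} : REMSem G e₂ ρ lam lam' → REMSem G (.union e₁ e₂) ρ lam lam'
  | concat {e₁ e₂ ρ₁ ρ₂ lam lam₁ lam'} :
      REMSem G e₁ ρ₁ lam lam₁ → REMSem G e₂ ρ₂ lam₁ lam' → ρ₁.last = ρ₂.start →
      REMSem G (.concat e₁ e₂) (ρ₁.append ρ₂) lam lam'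
  | plusOne {e ρ lam lam'} : REMSem G e ρ lam lam' → REMSem G (.plus e) ρ lam lam'
  | plusStep {e ρ₁ ρ₂ lam lam₁ lam'} :
      REMSem G e ρ₁ lam lam₁ → REMSem G (.plus e) ρ₂ lam₁ lam' → ρ₁.last = ρ₂.start →
      REMSem G (.plus e) (ρ₁.append ρ₂) lam lam'
  | test {e c ρ lam lam'} :
      REMSem G e ρ lam lam' → RCond.CSat (G.val ρ.last) lam' c →
      REMSem G (.test e c) ρ lam lam'
  | store {rs e ρ lam lam'} :
      REMSem G e ρ (setRegs lam rs (G.val ρ.start)) lam' →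
      REMSem G (.store rs e) ρ lam lam'

def REM.labels : REM → Finset ℕ
  | .eps => ∅
  | .lab a => {a}
  | .union e₁ e₂ => e₁.labels ∪ e₂.labels
  | .concat e₁ e₂ => e₁.labels ∪ e₂.labels
  | .plus e => e.labels
  | .test e _ => e.labels
  | .store _ e => e.labels

def REM.regs : REM → Finset ℕ
  | .eps => ∅
  | .lab _ => ∅
  | .union e₁ e₂ => e₁.regs ∪ e₂.regs
  | .concat e₁ e₂ => e₁.regs ∪ e₂.regs
  | .plus e => e.regs
  | .test e c => e.regs ∪ c.regs
  | .store rs e => rs.toFinset ∪ e.regs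

/-- A term denoting a register assignment: a register-assignment variable or `⊥̄`. -/
inductive RegTerm where
  | var (v : ℕ)
  | bot

def RegTerm.interp (αr : ℕ → RAsg) : RegTerm → RAsg
  | .var v => αr v
  | .bot => botAsg

def RegTerm.fv : RegTerm → Finset ℕ
  | .var v => {v}
  | .bot => ∅

/-- Register logic (RL). -/
inductive RL where
  | nodeEq (x y : ℕ)                            -- `x = y`
  | pathEq (p q : ℕ)                            -- `π = π'`
  | regEq (t₁ t₂ : RegTerm)                     -- `ν = ν'`, `ν = ⊥̄`
  | ends (x p y : ℕ)                            -- `(x, π, y)`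
  | rem (e : REM) (p : ℕ) (t₁ t₂ : RegTerm)     -- `e(π, ν₁, ν₂)`
  | not (φ : RL)
  | or (φ ψ : RL)
  | exNode (x : ℕ) (φ : RL)
  | exPath (p : ℕ) (φ : RL)
  | exReg (v : ℕ) (φ : RL)

/-- A valid register value for the logic with `k` registers over `G`: registers
`≥ k` are empty and stored data values occur in `G`. -/
def ValidAsg (G : DataGraph) (k : ℕ) (lam : RAsg) : Prop :=
  (∀ i, k ≤ i → lam i = none) ∧ ∀ i d, lam i = some d → d ∈ G.dataVals

namespace RL

/-- Satisfaction of RL formulas (with `k` registers) under assignments of nodes,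
paths and register values to the three kinds of variables. -/
def Sat (G : DataGraph) (k : ℕ) : RL → (ℕ → ℕ) → (ℕ → RawPath) → (ℕ → RAsg) → Prop
  | .nodeEq x y, αn, _, _ => αn x = αn y
  | .pathEq p q, _, αp, _ => αp p = αp q
  | .regEq t₁ t₂, _, _, αr => t₁.interp αr = t₂.interp αr
  | .ends x p y, αn, αp, _ => (αp p).start = αn x ∧ (αp p).last = αn y
  | .rem e p t₁ t₂, _, αp, αr => REMSem G e (αp p) (t₁.interp αr) (t₂.interp αr)
  | .not φ, αn, αp, αr => ¬ Sat G k φ αn αp αr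
  | .or φ ψ, αn, αp, αr => Sat G k φ αn αp αr ∨ Sat G k ψ αn αp αr
  | .exNode x φ, αn, αp, αr => ∃ u, u < G.n ∧ Sat G k φ (Function.update αn x u) αp αr
  | .exPath p φ, αn, αp, αr => ∃ ρ, G.IsPath ρ ∧ Sat G k φ αn (Function.update αp p ρ) αr
  | .exReg v φ, αn, αp, αr =>
      ∃ lam, ValidAsg G k lam ∧ Sat G k φ αn αp (Function.update αr v lam)

/-- Truth of a closed RL formula in `G`. -/
def holds (G : DataGraph) (k : ℕ) (φ : RL) : Prop :=
  Sat G k φ (fun _ => 0) (fun _ => ⟨0, []⟩) (fun _ => botAsg)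

def freeNode : RL → Finset ℕ
  | .nodeEq x y => {x, y}
  | .pathEq _ _ => ∅
  | .regEq _ _ => ∅
  | .ends x _ y => {x, y}
  | .rem _ _ _ _ => ∅
  | .not φ => freeNode φ
  | .or φ ψ => freeNode φ ∪ freeNode ψ
  | .exNode x φ => (freeNode φ).erase x
  | .exPath _ φ => freeNode φ
  | .exReg _ φ => freeNode φ

def freePath : RL → Finset ℕ
  | .nodeEq _ _ => ∅
  | .pathEq p q => {p, q}
  | .regEq _ _ => ∅
  | .ends _ p _ => {p}
  | .rem _ p _ _ => {p}
  | .not φ => freePath φ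
  | .or φ ψ => freePath φ ∪ freePath ψ
  | .exNode _ φ => freePath φ
  | .exPath p φ => (freePath φ).erase p
  | .exReg _ φ => freePath φ

def freeReg : RL → Finset ℕ
  | .nodeEq _ _ => ∅
  | .pathEq _ _ => ∅
  | .regEq t₁ t₂ => t₁.fv ∪ t₂.fv
  | .ends _ _ _ => ∅
  | .rem _ _ t₁ t₂ => t₁.fv ∪ t₂.fv
  | .not φ => freeReg φ
  | .or φ ψ => freeReg φ ∪ freeReg ψ
  | .exNode _ φ => freeReg φ
  | .exPath _ φ => freeReg φ
  | .exReg v φ => (freeReg φ).erase v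

/-- A closed RL formula (sentence). -/
def ClosedF (φ : RL) : Prop := freeNode φ = ∅ ∧ freePath φ = ∅ ∧ freeReg φ = ∅

def labels : RL → Finset ℕ
  | .rem e _ _ _ => e.labels
  | .not φ => labels φ
  | .or φ ψ => labels φ ∪ labels ψ
  | .exNode _ φ => labels φ
  | .exPath _ φ => labels φ
  | .exReg _ φ => labels φ
  | _ => ∅

def regs : RL → Finset ℕ
  | .rem e _ _ _ => e.regs
  | .not φ => regs φ
  | .or φ ψ => regs φ ∪ regs ψ
  | .exNode _ φ => regs φ
  | .exPath _ φ => regs φ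
  | .exReg _ φ => regs φ
  | _ => ∅

/-- The formula contains no path quantification. -/
def NoPathQuant : RL → Prop
  | .not φ => NoPathQuant φ
  | .or φ ψ => NoPathQuant φ ∧ NoPathQuant ψ
  | .exNode _ φ => NoPathQuant φ
  | .exReg _ φ => NoPathQuant φ
  | .exPath _ _ => False
  | _ => True

/-- Derived conjunction. -/
def and (φ ψ : RL) : RL := .not (.or (.not φ) (.not ψ))

/-- Derived implication. -/
def imp (φ ψ : RL) : RL := .or (.not φ) ψ

/-- Derived universal quantification over register assignments. -/
def allReg (v : ℕ) (φ : RL) : RL := .not (.exReg v (.not φ))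

end RL
/-! ## Positive fragment RL⁺, nested REMs, and NRL⁺ -/

/-- The positive fragment RL⁺ of register logic. -/
inductive RLPos where
  | nodeEq (x y : ℕ)
  | pathEq (p q : ℕ)
  | regEq (t₁ t₂ : RegTerm)
  | ends (x p y : ℕ)
  | rem (e : REM) (p : ℕ) (t₁ t₂ : RegTerm)
  | or (φ ψ : RLPos)
  | and (φ ψ : RLPos)
  | exNode (x : ℕ) (φ : RLPos)
  | exPath (p : ℕ) (φ : RLPos)
  | exReg (v : ℕ) (φ : RLPos)

namespace RLPos

def Sat (G : DataGraph) (k : ℕ) : RLPos → (ℕ → ℕ) → (ℕ → RawPath) → (ℕ → RAsg) → Prop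
  | .nodeEq x y, αn, _, _ => αn x = αn y
  | .pathEq p q, _, αp, _ => αp p = αp q
  | .regEq t₁ t₂, _, _, αr => t₁.interp αr = t₂.interp αr
  | .ends x p y, αn, αp, _ => (αp p).start = αn x ∧ (αp p).last = αn y
  | .rem e p t₁ t₂, _, αp, αr => REMSem G e (αp p) (t₁.interp αr) (t₂.interp αr)
  | .or φ ψ, αn, αp, αr => Sat G k φ αn αp αr ∨ Sat G k ψ αn αp αr
  | .and φ ψ, αn, αp, αr => Sat G k φ αn αp αr ∧ Sat G k ψ αn αp αr
  | .exNode x φ, αn, αp, αr => ∃ u, u < G.n ∧ Sat G k φ (Function.update αn x u) αp αr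
  | .exPath p φ, αn, αp, αr => ∃ ρ, G.IsPath ρ ∧ Sat G k φ αn (Function.update αp p ρ) αr
  | .exReg v φ, αn, αp, αr =>
      ∃ lam, ValidAsg G k lam ∧ Sat G k φ αn αp (Function.update αr v lam)

def freeNode : RLPos → Finset ℕ
  | .nodeEq x y => {x, y}
  | .pathEq _ _ => ∅
  | .regEq _ _ => ∅
  | .ends x _ y => {x, y}
  | .rem _ _ _ _ => ∅
  | .or φ ψ => freeNode φ ∪ freeNode ψ
  | .and φ ψ => freeNode φ ∪ freeNode ψ
  | .exNode x φ => (freeNode φ).erase x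
  | .exPath _ φ => freeNode φ
  | .exReg _ φ => freeNode φ

def freePath : RLPos → Finset ℕ
  | .nodeEq _ _ => ∅
  | .pathEq p q => {p, q}
  | .regEq _ _ => ∅
  | .ends _ p _ => {p}
  | .rem _ p _ _ => {p}
  | .or φ ψ => freePath φ ∪ freePath ψ
  | .and φ ψ => freePath φ ∪ freePath ψ
  | .exNode _ φ => freePath φ
  | .exPath p φ => (freePath φ).erase p
  | .exReg _ φ => freePath φ

def freeReg : RLPos → Finset ℕ
  | .regEq t₁ t₂ => t₁.fv ∪ t₂.fv
  | .rem _ _ t₁ t₂ => t₁.fv ∪ t₂.fv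
  | .or φ ψ => freeReg φ ∪ freeReg ψ
  | .and φ ψ => freeReg φ ∪ freeReg ψ
  | .exNode _ φ => freeReg φ
  | .exPath _ φ => freeReg φ
  | .exReg v φ => (freeReg φ).erase v
  | _ => ∅

def labels : RLPos → Finset ℕ
  | .rem e _ _ _ => e.labels
  | .or φ ψ => labels φ ∪ labels ψ
  | .and φ ψ => labels φ ∪ labels ψ
  | .exNode _ φ => labels φ
  | .exPath _ φ => labels φ
  | .exReg _ φ => labels φ
  | _ => ∅

end RLPos

/-- Nested regular expressions with memory (NREM): REMs plus the nesting operator `⟨e⟩`. -/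
inductive NREM where
  | eps
  | lab (a : ℕ)
  | union (e₁ e₂ : NREM)
  | concat (e₁ e₂ : NREM)
  | plus (e : NREM)
  | test (e : NREM) (c : RCond)
  | store (rs : List ℕ) (e : NREM)
  | nest (e : NREM)                  -- `⟨e⟩`

def NREM.star (e : NREM) : NREM := .union .eps (.plus e)

/-- Semantics of NREMs. -/
inductive NREMSem (G : DataGraph) : NREM → RawPath → RAsg → RAsg → Prop
  | eps (u : ℕ) (hu : u < G.n) (lam : RAsg) : NREMSem G .eps ⟨u, []⟩ lam lam
  | lab (u a v : ℕ) (h : (u, a, v) ∈ G.edges) (lam : RAsg) :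
      NREMSem G (.lab a) ⟨u, [(a, v)]⟩ lam lam
  | unionL {e₁ e₂ ρ lam lam'} : NREMSem G e₁ ρ lam lam' → NREMSem G (.union e₁ e₂) ρ lam lam'
  | unionR {e₁ e₂ ρ lam lam'} : NREMSem G e₂ ρ lam lam' → NREMSem G (.union e₁ e₂) ρ lam lam'
  | concat {e₁ e₂ ρ₁ ρ₂ lam lam₁ lam'} :
      NREMSem G e₁ ρ₁ lam lam₁ → NREMSem G e₂ ρ₂ lam₁ lam' → ρ₁.last = ρ₂.start →
      NREMSem G (.concat e₁ e₂) (ρ₁.append ρ₂) lam lam'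
  | plusOne {e ρ lam lam'} : NREMSem G e ρ lam lam' → NREMSem G (.plus e) ρ lam lam'
  | plusStep {e ρ₁ ρ₂ lam lam₁ lam'} :
      NREMSem G e ρ₁ lam lam₁ → NREMSem G (.plus e) ρ₂ lam₁ lam' → ρ₁.last = ρ₂.start →
      NREMSem G (.plus e) (ρ₁.append ρ₂) lam lam'
  | test {e c ρ lam lam'} :
      NREMSem G e ρ lam lam' → RCond.CSat (G.val ρ.last) lam' c →
      NREMSem G (.test e c) ρ lam lam'
  | store {rs e ρ lam lam'} :
      NREMSem G e ρ (setRegs lam rs (G.val ρ.start)) lam' →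
      NREMSem G (.store rs e) ρ lam lam'
  | nest {e ρ' lam lam'} :
      NREMSem G e ρ' lam lam' → NREMSem G (.nest e) ⟨ρ'.start, []⟩ lam lam

/-- NRL⁺: the positive fragment of register logic with nested REMs in its atoms. -/
inductive NRLPos where
  | nodeEq (x y : ℕ)
  | pathEq (p q : ℕ)
  | regEq (t₁ t₂ : RegTerm)
  | ends (x p y : ℕ)
  | rem (e : NREM) (p : ℕ) (t₁ t₂ : RegTerm)
  | or (φ ψ : NRLPos)
  | and (φ ψ : NRLPos)
  | exNode (x : ℕ) (φ : NRLPos)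
  | exPath (p : ℕ) (φ : NRLPos)
  | exReg (v : ℕ) (φ : NRLPos)

namespace NRLPos

def Sat (G : DataGraph) (k : ℕ) : NRLPos → (ℕ → ℕ) → (ℕ → RawPath) → (ℕ → RAsg) → Prop
  | .nodeEq x y, αn, _, _ => αn x = αn y
  | .pathEq p q, _, αp, _ => αp p = αp q
  | .regEq t₁ t₂, _, _, αr => t₁.interp αr = t₂.interp αr
  | .ends x p y, αn, αp, _ => (αp p).start = αn x ∧ (αp p).last = αn y
  | .rem e p t₁ t₂, _, αp, αr => NREMSem G e (αp p) (t₁.interp αr) (t₂.interp αr)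
  | .or φ ψ, αn, αp, αr => Sat G k φ αn αp αr ∨ Sat G k ψ αn αp αr
  | .and φ ψ, αn, αp, αr => Sat G k φ αn αp αr ∧ Sat G k ψ αn αp αr
  | .exNode x φ, αn, αp, αr => ∃ u, u < G.n ∧ Sat G k φ (Function.update αn x u) αp αr
  | .exPath p φ, αn, αp, αr => ∃ ρ, G.IsPath ρ ∧ Sat G k φ αn (Function.update αp p ρ) αr
  | .exReg v φ, αn, αp, αr =>
      ∃ lam, ValidAsg G k lam ∧ Sat G k φ αn αp (Function.update αr v lam)

end NRLPos

/-! ## Nondeterministic log-space machines (read-only input tape, bounded work tape) -/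

/-- A nondeterministic Turing machine with a read-only input tape and a work tape.
`δ q a b` (state, input symbol, work symbol) yields a list of possible moves
(new state, written work symbol, input head direction, work head direction);
`true` = right. -/
structure NTM where
  q0 : ℕ
  qf : ℕ
  δ : ℕ → ℕ → ℕ → List (ℕ × ℕ × Bool × Bool)

structure NConf where
  q : ℕ
  ih : ℕ
  wh : ℕ
  work : List ℕ
deriving DecidableEq

def NTM.nstep (M : NTM) (w : List ℕ) (c c' : NConf) : Prop :=
  ∃ t ∈ M.δ c.q (w.getD c.ih 0) (c.work.getD c.wh 0),
    c'.q = t.1 ∧ c'.work = c.work.set c.wh t.2.1 ∧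
    c'.ih = (if t.2.2.1 then c.ih + 1 else c.ih - 1) ∧
    c'.wh = (if t.2.2.2 then c.wh + 1 else c.wh - 1)

/-- `M` accepts `w` using at most `m` work-tape cells. -/
def NTM.Accepts (M : NTM) (w : List ℕ) (m : ℕ) : Prop :=
  ∃ c : NConf, Relation.ReflTransGen (fun a b => M.nstep w a b ∧ b.wh < m)
      ⟨M.q0, 0, 0, List.replicate m 0⟩ c ∧ c.q = M.qf

/-- Nondeterministic logarithmic space. -/
def InNLogSpace (L : Lang) : Prop :=
  ∃ (cst : ℕ) (M : NTM), ∀ w, w ∈ L ↔ M.Accepts w (cst * (Nat.log 2 w.length + 1) + cst)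
/-! ## Encodings of formulas and inputs -/

def encRegTerm : RegTerm → List ℕ
  | .var v => [0, v]
  | .bot => [1]

def encRCond : RCond → List ℕ
  | .eq i => [0, i]
  | .and c₁ c₂ => 1 :: (encRCond c₁ ++ encRCond c₂)
  | .not c => 2 :: encRCond c

def encREM : REM → List ℕ
  | .eps => [0]
  | .lab a => [1, a]
  | .union e₁ e₂ => 2 :: (encREM e₁ ++ encREM e₂)
  | .concat e₁ e₂ => 3 :: (encREM e₁ ++ encREM e₂)
  | .plus e => 4 :: encREM e
  | .test e c => 5 :: (encREM e ++ encRCond c)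
  | .store rs e => 6 :: rs.length :: (rs ++ encREM e)

def encRL : RL → List ℕ
  | .nodeEq x y => [0, x, y]
  | .pathEq p q => [1, p, q]
  | .regEq t₁ t₂ => 2 :: (encRegTerm t₁ ++ encRegTerm t₂)
  | .ends x p y => [3, x, p, y]
  | .rem e p t₁ t₂ => 4 :: p :: (encREM e ++ encRegTerm t₁ ++ encRegTerm t₂)
  | .not φ => 5 :: encRL φ
  | .or φ ψ => 6 :: (encRL φ ++ encRL ψ)
  | .exNode x φ => 7 :: x :: encRL φ
  | .exPath p φ => 8 :: p :: encRL φ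
  | .exReg v φ => 9 :: v :: encRL φ

def encNREM : NREM → List ℕ
  | .eps => [0]
  | .lab a => [1, a]
  | .union e₁ e₂ => 2 :: (encNREM e₁ ++ encNREM e₂)
  | .concat e₁ e₂ => 3 :: (encNREM e₁ ++ encNREM e₂)
  | .plus e => 4 :: encNREM e
  | .test e c => 5 :: (encNREM e ++ encRCond c)
  | .store rs e => 6 :: rs.length :: (rs ++ encNREM e)
  | .nest e => 7 :: encNREM e

def encNRLPos : NRLPos → List ℕ
  | .nodeEq x y => [0, x, y]
  | .pathEq p q => [1, p, q]
  | .regEq t₁ t₂ => 2 :: (encRegTerm t₁ ++ encRegTerm t₂)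
  | .ends x p y => [3, x, p, y]
  | .rem e p t₁ t₂ => 4 :: p :: (encNREM e ++ encRegTerm t₁ ++ encRegTerm t₂)
  | .or φ ψ => 6 :: (encNRLPos φ ++ encNRLPos ψ)
  | .and φ ψ => 10 :: (encNRLPos φ ++ encNRLPos ψ)
  | .exNode x φ => 7 :: x :: encNRLPos φ
  | .exPath p φ => 8 :: p :: encNRLPos φ
  | .exReg v φ => 9 :: v :: encNRLPos φ

/-- Decoding a list into a register assignment: entry `0` is `⊥`, entry `d+1` is value `d`. -/
def regOfList (l : List ℕ) : RAsg := fun i =>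
  match l.getD i 0 with
  | 0 => none
  | d + 1 => some d

/-- Validity of list-coded assignments (to node, path, and register-assignment
variables) over `G`, for the logic with `k` registers. -/
def AsgListsValid (G : DataGraph) (k : ℕ) (ns : List ℕ) (ps : List RawPath)
    (rs : List (List ℕ)) : Prop :=
  (∀ x ∈ ns, x < G.n) ∧ (∀ ρ ∈ ps, G.IsPath ρ) ∧ (∀ l ∈ rs, ValidAsg G k (regOfList l))

/-- Encoding of an input (data graph plus list-coded assignment). -/
def encInputAsg (G : DataGraph) (ns : List ℕ) (ps : List RawPath)
    (rs : List (List ℕ)) : List ℕ :=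
  encBlock (encodeGraph G) ++ encBlock (encListL (fun x => [x]) ns) ++
    encBlock (encListL encPath ps) ++ encBlock (encListL id rs)

/-- The evaluation problem for a fixed RL formula `φ` with `k` registers
(data complexity): inputs are a data graph together with an assignment
for the (free) variables of `φ`. -/
def evalRLFixed (k : ℕ) (φ : RL) : Lang :=
  {w | ∃ (G : DataGraph) (ns : List ℕ) (ps : List RawPath) (rs : List (List ℕ)),
      w = encInputAsg G ns ps rs ∧ G.WFAny ∧ AsgListsValid G k ns ps rs ∧
      RL.Sat G k φ (fun x => ns.getD x 0) (fun p => ps.getD p ⟨0, []⟩)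
        (fun v => regOfList (rs.getD v []))}

/-- The evaluation problem for a fixed closed RL formula (data complexity). -/
def evalRLSentence (k : ℕ) (φ : RL) : Lang :=
  {w | ∃ G : DataGraph, w = encodeGraph G ∧ G.WFAny ∧ RL.holds G k φ}

/-- Encoding of an input for the combined evaluation problem for RL. -/
def encInputRL (k : ℕ) (G : DataGraph) (φ : RL) (ns : List ℕ) (ps : List RawPath)
    (rs : List (List ℕ)) : List ℕ :=
  k :: encBlock (encRL φ) ++ encInputAsg G ns ps rs

/-- The (combined) evaluation problem for register logic, `Eval(RL)`. -/
def evalRLComb : Lang :=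
  {w | ∃ (k : ℕ) (G : DataGraph) (φ : RL) (ns : List ℕ) (ps : List RawPath)
      (rs : List (List ℕ)),
      w = encInputRL k G φ ns ps rs ∧ G.WFAny ∧ AsgListsValid G k ns ps rs ∧
      RL.Sat G k φ (fun x => ns.getD x 0) (fun p => ps.getD p ⟨0, []⟩)
        (fun v => regOfList (rs.getD v []))}

/-- The evaluation problem for a fixed RL⁺ formula (data complexity). -/
def evalRLPosFixed (k : ℕ) (φ : RLPos) : Lang :=
  {w | ∃ (G : DataGraph) (ns : List ℕ) (ps : List RawPath) (rs : List (List ℕ)),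
      w = encInputAsg G ns ps rs ∧ G.WFAny ∧ AsgListsValid G k ns ps rs ∧
      RLPos.Sat G k φ (fun x => ns.getD x 0) (fun p => ps.getD p ⟨0, []⟩)
        (fun v => regOfList (rs.getD v []))}

/-- The evaluation problem for a fixed NRL⁺ formula (data complexity). -/
def evalNRLPosFixed (k : ℕ) (φ : NRLPos) : Lang :=
  {w | ∃ (G : DataGraph) (ns : List ℕ) (ps : List RawPath) (rs : List (List ℕ)),
      w = encInputAsg G ns ps rs ∧ G.WFAny ∧ AsgListsValid G k ns ps rs ∧
      NRLPos.Sat G k φ (fun x => ns.getD x 0) (fun p => ps.getD p ⟨0, []⟩)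
        (fun v => regOfList (rs.getD v []))}

/-- Encoding of an input for the combined evaluation problem for NRL⁺. -/
def encInputNRLPos (k : ℕ) (G : DataGraph) (φ : NRLPos) (ns : List ℕ)
    (ps : List RawPath) (rs : List (List ℕ)) : List ℕ :=
  k :: encBlock (encNRLPos φ) ++ encInputAsg G ns ps rs

/-- The combined evaluation problem for NRL⁺. -/
def evalNRLPosComb : Lang :=
  {w | ∃ (k : ℕ) (G : DataGraph) (φ : NRLPos) (ns : List ℕ) (ps : List RawPath)
      (rs : List (List ℕ)),
      w = encInputNRLPos k G φ ns ps rs ∧ G.WFAny ∧ AsgListsValid G k ns ps rs ∧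
      NRLPos.Sat G k φ (fun x => ns.getD x 0) (fun p => ps.getD p ⟨0, []⟩)
        (fun v => regOfList (rs.getD v []))}

/-! ## Some graph-theoretic queries -/

/-- The query (Q): there are a node `z` and a path from `u` to `v` in which
every node is connected to `z` (by some path). -/
def QueryQ (G : DataGraph) (u v : ℕ) : Prop :=
  ∃ z, z < G.n ∧ ∃ ρ : RawPath, G.IsPath ρ ∧ ρ.start = u ∧ ρ.last = v ∧
    ∀ x ∈ ρ.nodes, ∃ ρ' : RawPath, G.IsPath ρ' ∧ ρ'.start = x ∧ ρ'.last = z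

/-- `G` has a Hamiltonian path: a path visiting every node exactly once. -/
def HamPath (G : DataGraph) : Prop :=
  ∃ ρ : RawPath, G.IsPath ρ ∧ ρ.nodes.Nodup ∧ ∀ v, v < G.n → v ∈ ρ.nodes

/-- `G` (as a representation of an undirected graph) is bipartite. -/
def Bipartite (G : DataGraph) : Prop :=
  ∃ S₁ S₂ : Set ℕ, (∀ v, v < G.n → ((v ∈ S₁ ∨ v ∈ S₂) ∧ ¬(v ∈ S₁ ∧ v ∈ S₂))) ∧
    ∀ e ∈ G.edges, (e.1 ∈ S₁ ∧ e.2.2 ∈ S₂) ∨ (e.1 ∈ S₂ ∧ e.2.2 ∈ S₁)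

/-- `G` contains a cycle of odd length. -/
def HasOddCycle (G : DataGraph) : Prop :=
  ∃ ρ : RawPath, G.IsPath ρ ∧ Odd ρ.steps.length ∧ ρ.last = ρ.start

/-- Isomorphism of data graphs (preserving edges and equalities of data values). -/
def GraphIso (G G' : DataGraph) : Prop :=
  G.n = G'.n ∧ ∃ f : ℕ → ℕ, Set.BijOn f (Set.Iio G.n) (Set.Iio G'.n) ∧
    (∀ u a v, u < G.n → v < G.n → ((u, a, v) ∈ G.edges ↔ (f u, a, f v) ∈ G'.edges)) ∧
    (∀ u v, u < G.n → v < G.n → (G.val u = G.val v ↔ G'.val (f u) = G'.val (f v)))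

/-- A Boolean query: an isomorphism-closed class of graph databases. -/
def IsoClosed (Q : Set DataGraph) : Prop :=
  ∀ G G', GraphIso G G' → (G ∈ Q ↔ G' ∈ Q)
/-! ## Counters and descriptions -/

/-- `Σ_k = {a_k, b_k}`, coded as `a_k = 2k` (representing 0) and `b_k = 2k+1`
(representing 1). -/
def sigmaAlph (k : ℕ) : Finset ℕ := {2 * k, 2 * k + 1}

/-- `Γ_k = Σ_1 ∪ ⋯ ∪ Σ_k`. -/
def gammaAlph (k : ℕ) : Finset ℕ := (Finset.range k).biUnion (fun i => sigmaAlph (i + 1))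

/-- The number represented by a word over some `Σ_k` (`a_k ↦ 0`, `b_k ↦ 1`),
least significant bit first. -/
def bitsVal (w : List ℕ) : ℕ := (w.zipIdx.map (fun x => (x.1 % 2) * 2 ^ x.2)).sum

/-- `SeqDesc Cnt Letter p j w ds`: `w` is a sequence `σ_p d_p ⋯ σ_j d_j` where
`Cnt i σ_i` holds for each `i`, each `d_i` satisfies `Letter`, and `ds = [d_p, …, d_j]`. -/
def SeqDesc (Cnt : ℕ → List ℕ → Prop) (Letter : ℕ → Prop) (p j : ℕ)
    (w : List ℕ) (ds : List ℕ) : Prop :=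
  ∃ σs : List (List ℕ),
    σs.length = j + 1 - p ∧ ds.length = j + 1 - p ∧
    (∀ i, i < σs.length → Cnt (p + i) (σs.getD i [])) ∧
    (∀ d ∈ ds, Letter d) ∧
    w = (List.zipWith (fun σ d => σ ++ [d]) σs ds).foldr (· ++ ·) []

/-- `IsCounterVal f0 n k w v`: `w` is a `k`-counter of length `n` representing the
number `v`. -/
def IsCounterVal (f0 n : ℕ) : ℕ → List ℕ → ℕ → Prop
  | 0, _, _ => False
  | 1, w, v => w.length = f0 * n ∧ (∀ l ∈ w, l ∈ sigmaAlph 1) ∧ v = bitsVal w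
  | k + 2, w, v =>
      ∃ ds : List ℕ,
        SeqDesc (fun i σ => IsCounterVal f0 n (k + 1) σ i) (· ∈ sigmaAlph (k + 2)) 0
          (tower (k + 1) (f0 * n) - 1) w ds ∧ v = bitsVal ds

/-- `w` is a `(k, f0·n, p)`-description over the alphabet `Δ`. -/
def IsDescription (f0 n k p : ℕ) (Δ : Finset ℕ) (w : List ℕ) : Prop :=
  2 ≤ k ∧ ∃ ds : List ℕ,
    SeqDesc (fun i σ => IsCounterVal f0 n (k - 1) σ i) (· ∈ Δ) p
      (tower k (f0 * (n - 1)) - 1) w ds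

/-- Projection of a word onto a subalphabet. -/
def proj (S : Finset ℕ) (l : List ℕ) : List ℕ := l.filter (fun a => decide (a ∈ S))

/-- The letter `c` occurs exactly once in `l`, namely at the first position. -/
def FirstOnly (c : ℕ) (l : List ℕ) : Prop := ∃ l', l = c :: l' ∧ c ∉ l'

/-- The letter `c` occurs exactly once in `l`, namely at the last position. -/
def LastOnly (c : ℕ) (l : List ℕ) : Prop := ∃ l', l = l' ++ [c] ∧ c ∉ l'

/-! ## First-order logic over the vocabulary τ -/

abbrev GPath (G : DataGraph) := {ρ : RawPath // G.IsPath ρ}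
abbrev RegVal (G : DataGraph) (k : ℕ) := {lam : RAsg // ValidAsg G k lam}

theorem botValid (G : DataGraph) (k : ℕ) : ValidAsg G k botAsg :=
  ⟨fun _ _ => rfl, fun _ d h => by simp [botAsg] at h⟩

/-- The common domain: nodes, paths and `k`-tuples of register values of `G`. -/
def TDom (G : DataGraph) (k : ℕ) : Type := Fin G.n ⊕ (GPath G ⊕ RegVal G k)

/-- Membership in the structure determined by a set `P` of paths. -/
def inTDom {G : DataGraph} {k : ℕ} (P : Set (GPath G)) : TDom G k → Prop
  | Sum.inl _ => True
  | Sum.inr (Sum.inl ρ) => ρ ∈ P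
  | Sum.inr (Sum.inr _) => True

/-- First-order formulas over the vocabulary
`⟨Nodes, Paths, Registers, Endpoints, e_1, …, e_m, ⊥̄⟩`; variables are naturals. -/
inductive FOF (m : ℕ) where
  | eq (x y : ℕ)
  | nodes (x : ℕ)
  | paths (x : ℕ)
  | registers (x : ℕ)
  | endpoints (x y z : ℕ)
  | erel (i : Fin m) (x y z : ℕ)
  | isBot (x : ℕ)
  | not (φ : FOF m)
  | or (φ ψ : FOF m)
  | ex (x : ℕ) (φ : FOF m)

/-- Quantifier rank. -/
def FOF.qrank {m : ℕ} : FOF m → ℕ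
  | .not φ => φ.qrank
  | .or φ ψ => max φ.qrank ψ.qrank
  | .ex _ φ => φ.qrank + 1
  | _ => 0

/-- Satisfaction over the τ-structure whose path elements are those in `P` (the
nodes and register values of `G` are always present). -/
def FOF.FSat {m : ℕ} (G : DataGraph) (k : ℕ) (es : Fin m → REM) (P : Set (GPath G)) :
    FOF m → (ℕ → TDom G k) → Prop
  | .eq x y, α => α x = α y
  | .nodes x, α => ∃ u, α x = Sum.inl u
  | .paths x, α => ∃ ρ, ρ ∈ P ∧ α x = Sum.inr (Sum.inl ρ)
  | .registers x, α => ∃ l, α x = Sum.inr (Sum.inr l)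
  | .endpoints x y z, α => ∃ (u v : Fin G.n) (ρ : GPath G), ρ ∈ P ∧
      α x = Sum.inl u ∧ α y = Sum.inr (Sum.inl ρ) ∧ α z = Sum.inl v ∧
      ρ.1.start = (u : ℕ) ∧ ρ.1.last = (v : ℕ)
  | .erel i x y z, α => ∃ (l₁ l₂ : RegVal G k) (ρ : GPath G), ρ ∈ P ∧
      α x = Sum.inr (Sum.inr l₁) ∧ α y = Sum.inr (Sum.inl ρ) ∧
      α z = Sum.inr (Sum.inr l₂) ∧ REMSem G (es i) ρ.1 l₁.1 l₂.1
  | .isBot x, α => α x = Sum.inr (Sum.inr ⟨botAsg, botValid G k⟩)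
  | .not φ, α => ¬ FOF.FSat G k es P φ α
  | .or φ ψ, α => FOF.FSat G k es P φ α ∨ FOF.FSat G k es P ψ α
  | .ex x φ, α => ∃ d : TDom G k, inTDom P d ∧ FOF.FSat G k es P φ (Function.update α x d)

/-- The path `ρ` satisfies the type `E` (relative to the REMs `es`). -/
def SatType {m : ℕ} (G : DataGraph) (k : ℕ) (es : Fin m → REM) (ρ : RawPath)
    (E : Set (Fin m × RegVal G k × RegVal G k)) : Prop :=
  ∀ (i : Fin m) (l₁ l₂ : RegVal G k), REMSem G (es i) ρ l₁.1 l₂.1 ↔ (i, l₁, l₂) ∈ E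
/-! ## Further auxiliary notions used in the statements -/

/-- PSPACE-hardness (w.r.t. polynomial-time reductions). -/
def PSpaceHard (L : Lang) : Prop := ∀ L' : Lang, InPSpace L' → ReducesTo L' L

/-- A Boolean query on graph databases over `{0, …, s-1}` is definable in WL. -/
def DefinableWL (s : ℕ) (Q : Set DataGraph) : Prop :=
  ∃ φ : WL, WL.Closed φ ∧ (∀ a ∈ WL.labels φ, a < s) ∧
    ∀ G : DataGraph, G.WF s → G.IsDB → (G ∈ Q ↔ WL.holds G φ)

/-- A Boolean query on graph databases over `{0, …, s-1}` is definable in RL. -/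
def DefinableRL (s : ℕ) (Q : Set DataGraph) : Prop :=
  ∃ (k : ℕ) (φ : RL), RL.ClosedF φ ∧ (∀ a ∈ RL.labels φ, a < s) ∧
    ∀ G : DataGraph, G.WF s → G.IsDB → (G ∈ Q ↔ RL.holds G k φ)

/-- Assignment of the path `ρ` to the path variable `0`. -/
def asg1 (ρ : RawPath) : ℕ → RawPath :=
  Function.update (fun _ => (⟨0, []⟩ : RawPath)) 0 ρ

/-- Assignment of `ρ`, `ρ'` to the path variables `0`, `1`. -/
def asg2 (ρ ρ' : RawPath) : ℕ → RawPath := Function.update (asg1 ρ) 1 ρ'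

/-- Default assignment for position variables. -/
def posDefault : ℕ × ℕ → ℕ := fun _ => 0

/-- The `Γ_k`-projection of the label of `ρ` is a `k`-counter encoding the number `v`. -/
def EncodesVal (f0 n k : ℕ) (ρ : RawPath) (v : ℕ) : Prop :=
  IsCounterVal f0 n k (proj (gammaAlph k) ρ.label) v

/-- The assignment sending the first variables to the parameter tuples
`vbar`, `ρbar`, `lbar` (and all remaining variables to `⊥̄`). -/
def paramAsg (G : DataGraph) (k : ℕ) {a b c : ℕ} (vbar : Fin a → Fin G.n)
    (ρbar : Fin b → GPath G) (lbar : Fin c → RegVal G k) : ℕ → TDom G k := fun x =>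
  if h : x < a then Sum.inl (vbar ⟨x, h⟩)
  else if h2 : x < a + b then Sum.inr (Sum.inl (ρbar ⟨x - a, by omega⟩))
  else if h3 : x < a + b + c then Sum.inr (Sum.inr (lbar ⟨x - a - b, by omega⟩))
  else Sum.inr (Sum.inr ⟨botAsg, botValid G k⟩)

/-- Encoding of an instance of the "`i` distinct paths of a given type" problem. -/
def encInst6 (G : DataGraph) (es : List REM) (u v : ℕ)
    (El : List (ℕ × List ℕ × List ℕ)) (i : ℕ) : List ℕ :=
  encBlock (encodeGraph G) ++ encBlock (encListL encREM es) ++ [u, v, i] ++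
    encBlock (encListL (fun t => t.1 :: (encBlock t.2.1 ++ encBlock t.2.2)) El)

/-- `ρ` satisfies the (list-coded) type `El` relative to the (list-coded) REMs `es`:
for every `e ∈ es` and all valid register values `lam`, `lam'`,
`(ρ.start, lam, ρ, ρ.last, lam') ∈ ⟦e⟧_G` exactly when the triple is listed in `El`. -/
def SatTypeList (G : DataGraph) (k : ℕ) (es : List REM) (ρ : RawPath)
    (El : List (ℕ × List ℕ × List ℕ)) : Prop :=
  ∀ idx, idx < es.length → ∀ lam lam' : RAsg, ValidAsg G k lam → ValidAsg G k lam' →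
    (REMSem G (es.getD idx .eps) ρ lam lam' ↔
      ∃ t ∈ El, t.1 = idx ∧ regOfList t.2.1 = lam ∧ regOfList t.2.2 = lam')

/-! Over the one-letter alphabet the expressions `a*` and `a⁺` match exactly the paths (resp.
nonempty paths) of `G` and leave the registers untouched.  Hence `e₁` matches `π` iff `π`
factors as `ρ₁ · ρ · ρ₂` with `ρ` nonempty and both ends of `ρ` carrying the same data value,
i.e. (data values being injective) iff `π` revisits a node; and `e₂`, with `r` holding `d`,
matches `π` iff some node of `π` carries `d`.  With a single register the assignments other than
`⊥̄` are exactly the data values of nodes, so the sentence says that some path of `G` is simple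
and meets every node. -/

namespace RawPath

@[simp] lemma nodes_mk (u : ℕ) (st : List (ℕ × ℕ)) :
    (⟨u, st⟩ : RawPath).nodes = u :: st.map Prod.snd := rfl

lemma last_mk_cons (u : ℕ) (s : ℕ × ℕ) (st : List (ℕ × ℕ)) :
    (⟨u, s :: st⟩ : RawPath).last = (⟨s.2, st⟩ : RawPath).last :=
  List.getLastD_cons ..

lemma last_mem_nodes (ρ : RawPath) : ρ.last ∈ ρ.nodes :=
  List.getLastD_mem_cons

lemma last_mem_map_snd {ρ : RawPath} (h : ρ.steps ≠ []) : ρ.last ∈ ρ.steps.map Prod.snd := by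
  obtain ⟨u, _ | ⟨s, st⟩⟩ := ρ
  · exact absurd rfl h
  · rw [last_mk_cons]
    exact List.getLastD_mem_cons

lemma steps_append (ρ₁ ρ₂ : RawPath) : (ρ₁.append ρ₂).steps = ρ₁.steps ++ ρ₂.steps :=
  rfl

lemma nodes_append (ρ₁ ρ₂ : RawPath) :
    (ρ₁.append ρ₂).nodes = ρ₁.nodes ++ ρ₂.steps.map Prod.snd := by
  simp [append, nodes]

lemma mem_nodes_iff {π : RawPath} {v : ℕ} :
    v ∈ π.nodes ↔ ∃ ρ₁ ρ₂ : RawPath, π = ρ₁.append ρ₂ ∧ ρ₁.last = v ∧ ρ₂.start = v := by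
  constructor
  · obtain ⟨u, st⟩ := π
    induction st generalizing u with
    | nil =>
      intro h
      obtain rfl : v = u := by simpa using h
      exact ⟨⟨v, []⟩, ⟨v, []⟩, rfl, rfl, rfl⟩
    | cons s st ih =>
      intro h
      rcases List.mem_cons.1 h with rfl | h
      · exact ⟨⟨v, []⟩, ⟨v, s :: st⟩, rfl, rfl, rfl⟩
      obtain ⟨⟨w, st₁⟩, ρ₂, hsplit, hlast, hstart⟩ := ih s.2 h
      simp only [append, mk.injEq] at hsplit
      obtain ⟨rfl, rfl⟩ := hsplit
      exact ⟨⟨u, s :: st₁⟩, ρ₂, rfl, by rwa [last_mk_cons], hstart⟩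
  · rintro ⟨ρ₁, ρ₂, rfl, rfl, -⟩
    rw [nodes_append]
    exact List.mem_append_left _ ρ₁.last_mem_nodes

def HasLoop (π : RawPath) : Prop :=
  ∃ ρ₁ ρ ρ₂ : RawPath, π = ρ₁.append (ρ.append ρ₂) ∧ ρ₁.last = ρ.start ∧
    ρ.last = ρ₂.start ∧ ρ.steps ≠ [] ∧ ρ.last = ρ.start

lemma nodup_nodes_iff_not_hasLoop {π : RawPath} : π.nodes.Nodup ↔ ¬ π.HasLoop := by
  constructor
  · rintro hnd ⟨ρ₁, ρ, ρ₂, rfl, hl₁, -, hne, hloop⟩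
    rw [nodes_append, List.nodup_append] at hnd
    refine hnd.2.2 _ ρ₁.last_mem_nodes _ ?_ rfl
    rw [steps_append, List.map_append, hl₁, ← hloop]
    exact List.mem_append_left _ (last_mem_map_snd hne)
  · refine Not.imp_symm ?_
    obtain ⟨u, st⟩ := π
    induction st generalizing u with
    | nil => simp
    | cons s st ih =>
      rw [nodes_mk, List.map_cons, List.nodup_cons, ← nodes_mk, not_and_or, not_not]
      rintro (hu | hnd)
      · obtain ⟨⟨w, st₁⟩, ρ₂, hsplit, hlast, hstart⟩ := mem_nodes_iff.1 hu
        simp only [append, mk.injEq] at hsplit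
        obtain ⟨rfl, rfl⟩ := hsplit
        refine ⟨⟨u, []⟩, ⟨u, s :: st₁⟩, ρ₂, rfl, rfl, ?_, List.cons_ne_nil _ _, ?_⟩ <;>
          rw [last_mk_cons] <;> simp [hlast, hstart]
      · obtain ⟨⟨w, st₁⟩, ρ, ρ₂, hsplit, hl₁, hloop⟩ := ih s.2 hnd
        simp only [append, mk.injEq] at hsplit
        obtain ⟨rfl, rfl⟩ := hsplit
        exact ⟨⟨u, s :: st₁⟩, ρ, ρ₂, rfl, by rwa [last_mk_cons], hloop⟩

end RawPath

namespace DataGraph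

variable {G : DataGraph} {s : ℕ}

lemma isPath_mk_nil_iff {u : ℕ} : G.IsPath ⟨u, []⟩ ↔ u < G.n := by
  simp [IsPath]

lemma isPath_mk_cons_iff (hWF : G.WF s) {u a v : ℕ} {st : List (ℕ × ℕ)} :
    G.IsPath ⟨u, (a, v) :: st⟩ ↔ (u, a, v) ∈ G.edges ∧ G.IsPath ⟨v, st⟩ := by
  simp only [IsPath, List.length_cons, Nat.forall_lt_succ_left', RawPath.nodeAt, RawPath.labelAt,
    RawPath.nodes, List.map_cons, List.getD_cons_zero, List.getD_cons_succ]
  constructor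
  · rintro ⟨-, he, hst⟩
    exact ⟨he, (hWF.1 _ he).2.2, hst⟩
  · rintro ⟨he, -, hst⟩
    exact ⟨(hWF.1 _ he).1, he, hst⟩

lemma isPath_append_iff (hWF : G.WF s) {ρ₁ ρ₂ : RawPath} (hl : ρ₁.last = ρ₂.start) :
    G.IsPath (ρ₁.append ρ₂) ↔ G.IsPath ρ₁ ∧ G.IsPath ρ₂ := by
  obtain ⟨u, st⟩ := ρ₁
  induction st generalizing u with
  | nil =>
    obtain rfl : u = ρ₂.start := hl
    rw [isPath_mk_nil_iff]
    exact ⟨fun h => ⟨h.1, h⟩, fun h => h.2⟩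
  | cons x st ih =>
    obtain ⟨a, v⟩ := x
    rw [RawPath.last_mk_cons] at hl
    show G.IsPath ⟨u, (a, v) :: (RawPath.append ⟨v, st⟩ ρ₂).steps⟩ ↔ _
    rw [isPath_mk_cons_iff hWF, isPath_mk_cons_iff hWF, and_assoc]
    exact and_congr_right' (ih v hl)

lemma IsPath.lt_of_mem_nodes (hWF : G.WF s) {π : RawPath} (hπ : G.IsPath π) {v : ℕ}
    (hv : v ∈ π.nodes) : v < G.n := by
  obtain ⟨u, st⟩ := π
  induction st generalizing u with
  | nil =>
    obtain rfl : v = u := by simpa using hv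
    exact hπ.1
  | cons x st ih =>
    obtain ⟨a, w⟩ := x
    rw [isPath_mk_cons_iff hWF] at hπ
    rcases List.mem_cons.1 hv with rfl | hv
    · exact (hWF.1 _ hπ.1).1
    · exact ih w hπ.2 hv

end DataGraph

section REMSem

variable {G : DataGraph} {s : ℕ}

lemma REMSem.isPath (hWF : G.WF s) {e : REM} {ρ : RawPath} {lam lam' : RAsg}
    (h : REMSem G e ρ lam lam') : G.IsPath ρ := by
  induction h with
  | eps u hu => exact DataGraph.isPath_mk_nil_iff.2 hu
  | lab u a v he =>
    exact (DataGraph.isPath_mk_cons_iff hWF).2 ⟨he, DataGraph.isPath_mk_nil_iff.2 (hWF.1 _ he).2.2⟩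
  | unionL _ ih | unionR _ ih | plusOne _ ih | test _ _ ih | store _ ih => exact ih
  | concat _ _ hl ih₁ ih₂ | plusStep _ _ hl ih₁ ih₂ =>
    exact (DataGraph.isPath_append_iff hWF hl).2 ⟨ih₁, ih₂⟩

lemma REMSem.eq_and_steps_ne_nil_of_plus_lab {a : ℕ} {ρ : RawPath} {lam lam' : RAsg}
    (h : REMSem G (.plus (.lab a)) ρ lam lam') : lam' = lam ∧ ρ.steps ≠ [] := by
  generalize he : REM.plus (.lab a) = e at h
  induction h with
  | plusOne h =>
    cases he
    cases h
    exact ⟨rfl, List.cons_ne_nil _ _⟩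
  | plusStep h _ _ _ ih₂ =>
    cases he
    cases h
    exact ⟨(ih₂ rfl).1, List.cons_ne_nil _ _⟩
  | _ => cases he

lemma remSem_plus_lab_zero_iff (hWF : G.WF 1) {ρ : RawPath} {lam lam' : RAsg} :
    REMSem G (.plus (.lab 0)) ρ lam lam' ↔ G.IsPath ρ ∧ ρ.steps ≠ [] ∧ lam' = lam := by
  refine ⟨fun h => ⟨h.isPath hWF, h.eq_and_steps_ne_nil_of_plus_lab.symm⟩, ?_⟩
  rintro ⟨hρ, hne, rfl⟩
  obtain ⟨u, st⟩ := ρ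
  induction st generalizing u with
  | nil => exact absurd rfl hne
  | cons x st ih =>
    obtain ⟨a, v⟩ := x
    obtain ⟨he, htail⟩ := (DataGraph.isPath_mk_cons_iff hWF).1 hρ
    obtain rfl : a = 0 := Nat.lt_one_iff.1 (hWF.1 _ he).2.1
    cases st with
    | nil => exact .plusOne (.lab u 0 v he _)
    | cons t st => exact .plusStep (.lab u 0 v he _) (ih v htail (List.cons_ne_nil _ _)) rfl

lemma remSem_star_lab_zero_iff (hWF : G.WF 1) {ρ : RawPath} {lam lam' : RAsg} :
    REMSem G (.star (.lab 0)) ρ lam lam' ↔ G.IsPath ρ ∧ lam' = lam := by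
  constructor
  · intro h
    refine ⟨h.isPath hWF, ?_⟩
    cases h with
    | unionL h => cases h; rfl
    | unionR h => exact ((remSem_plus_lab_zero_iff hWF).1 h).2.2
  · rintro ⟨hρ, rfl⟩
    obtain ⟨u, _ | ⟨t, st⟩⟩ := ρ
    · exact .unionL (.eps u (DataGraph.isPath_mk_nil_iff.1 hρ) _)
    · exact .unionR ((remSem_plus_lab_zero_iff hWF).2 ⟨hρ, List.cons_ne_nil _ _, rfl⟩)

end REMSem

lemma validAsg_one_iff {G : DataGraph} {lam : RAsg} :
    ValidAsg G 1 lam ↔ lam = botAsg ∨ ∃ v < G.n, lam = setRegs botAsg [0] (G.val v) := by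
  constructor
  · rintro ⟨hnone, hdata⟩
    have hpos : ∀ i, i ≠ 0 → lam i = none := fun i hi => hnone i (Nat.one_le_iff_ne_zero.2 hi)
    cases h0 : lam 0 with
    | none =>
      left
      funext i
      rcases eq_or_ne i 0 with rfl | hi
      exacts [h0, hpos i hi]
    | some d =>
      obtain ⟨v, hv, rfl⟩ := hdata 0 d h0
      refine Or.inr ⟨v, hv, funext fun i => ?_⟩
      rcases eq_or_ne i 0 with rfl | hi
      · simpa [setRegs] using h0
      · simpa [setRegs, botAsg, hi] using hpos i hi
  · rintro (rfl | ⟨v, hv, rfl⟩)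
    · exact botValid G 1
    · refine ⟨fun i hi => ?_, fun i d hd => ?_⟩
      · simp [setRegs, botAsg, show i ≠ 0 by omega]
      · by_cases hi : i = 0
        · simp only [setRegs, hi, List.mem_singleton, if_true, Option.some.injEq] at hd
          exact ⟨v, hv, hd⟩
        · simp [setRegs, botAsg, hi] at hd

section Hamiltonicity

variable {G : DataGraph} {π : RawPath}

def REM.revisit : REM :=
  .concat (.star (.lab 0)) (.concat (.store [0] (.test (.plus (.lab 0)) (.eq 0))) (.star (.lab 0)))

def REM.visit : REM :=
  .concat (.test (.star (.lab 0)) (.eq 0)) (.star (.lab 0))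

lemma remSem_visit_iff (hWF : G.WF 1) (hπ : G.IsPath π) {lam : RAsg} :
    REMSem G REM.visit π lam lam ↔ ∃ v ∈ π.nodes, lam 0 = some (G.val v) := by
  constructor
  · intro h
    cases h with
    | concat h₁ _ _ =>
      cases h₁ with
      | test h₁ hval =>
        obtain ⟨-, rfl⟩ := (remSem_star_lab_zero_iff hWF).1 h₁
        refine ⟨_, ?_, hval⟩
        rw [RawPath.nodes_append]
        exact List.mem_append_left _ (RawPath.last_mem_nodes _)
  · rintro ⟨v, hv, hlam⟩
    obtain ⟨ρ₁, ρ₂, rfl, hl₁, hs₂⟩ := RawPath.mem_nodes_iff.1 hv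
    obtain ⟨hρ₁, hρ₂⟩ := (DataGraph.isPath_append_iff hWF (hl₁.trans hs₂.symm)).1 hπ
    refine .concat (.test ((remSem_star_lab_zero_iff hWF).2 ⟨hρ₁, rfl⟩) ?_)
      ((remSem_star_lab_zero_iff hWF).2 ⟨hρ₂, rfl⟩) (hl₁.trans hs₂.symm)
    show lam 0 = some (G.val ρ₁.last)
    rw [hl₁, hlam]

lemma RawPath.HasLoop.of_remSem_revisit (hWF : G.WF 1) (hDB : G.IsDB) {lam lam' : RAsg}
    (h : REMSem G REM.revisit π lam lam') : π.HasLoop := by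
  cases h with
  | concat _ h hl₁ =>
    cases h with
    | concat h _ hl =>
      cases h with
      | store h =>
        cases h with
        | test h hval =>
          obtain ⟨hρ, hne, rfl⟩ := (remSem_plus_lab_zero_iff hWF).1 h
          simp only [RCond.CSat, setRegs, List.mem_singleton, if_true, Option.some.injEq] at hval
          refine ⟨_, _, _, rfl, hl₁, hl, hne, (hDB _ _ hρ.1 ?_ hval).symm⟩
          exact hρ.lt_of_mem_nodes hWF (RawPath.last_mem_nodes _)

lemma RawPath.HasLoop.exists_remSem_revisit (hWF : G.WF 1) (hπ : G.IsPath π) (h : π.HasLoop)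
    (lam : RAsg) : ∃ v ∈ π.nodes, REMSem G REM.revisit π lam (setRegs lam [0] (G.val v)) := by
  obtain ⟨ρ₁, ρ, ρ₂, rfl, hl₁, hl, hne, hloop⟩ := h
  obtain ⟨hρ₁, hρρ₂⟩ := (DataGraph.isPath_append_iff (ρ₂ := ρ.append ρ₂) hWF hl₁).1 hπ
  obtain ⟨hρ, hρ₂⟩ := (DataGraph.isPath_append_iff hWF hl).1 hρρ₂
  refine ⟨ρ.start, ?_, .concat ((remSem_star_lab_zero_iff hWF).2 ⟨hρ₁, rfl⟩) ?_ hl₁⟩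
  · rw [RawPath.nodes_append, ← hl₁]
    exact List.mem_append_left _ (RawPath.last_mem_nodes _)
  · refine .concat (.store (.test ((remSem_plus_lab_zero_iff hWF).2 ⟨hρ, hne, rfl⟩) ?_))
      ((remSem_star_lab_zero_iff hWF).2 ⟨hρ₂, rfl⟩) hl
    simp [RCond.CSat, setRegs, hloop]

lemma forall_not_remSem_revisit_iff (hWF : G.WF 1) (hDB : G.IsDB) (hπ : G.IsPath π) :
    (∀ lam, ValidAsg G 1 lam → ∀ lam', ValidAsg G 1 lam' → ¬ REMSem G REM.revisit π lam lam') ↔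
      π.nodes.Nodup := by
  rw [RawPath.nodup_nodes_iff_not_hasLoop]
  constructor
  · intro h hloop
    obtain ⟨v, hv, hrem⟩ := hloop.exists_remSem_revisit hWF hπ botAsg
    exact h _ (botValid G 1) _ (validAsg_one_iff.2 (.inr ⟨v, hπ.lt_of_mem_nodes hWF hv, rfl⟩)) hrem
  · exact fun h _ _ _ _ hrem => h (.of_remSem_revisit hWF hDB hrem)

lemma forall_remSem_visit_iff (hWF : G.WF 1) (hDB : G.IsDB) (hπ : G.IsPath π) :
    (∀ lam, ValidAsg G 1 lam → ¬ lam = botAsg → REMSem G REM.visit π lam lam) ↔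
      ∀ v, v < G.n → v ∈ π.nodes := by
  simp only [remSem_visit_iff hWF hπ]
  constructor
  · intro h v hv
    have hne : setRegs botAsg [0] (G.val v) ≠ botAsg := fun h => by
      simpa [setRegs, botAsg] using congrFun h 0
    obtain ⟨w, hw, hval⟩ := h _ (validAsg_one_iff.2 (.inr ⟨v, hv, rfl⟩)) hne
    simp only [setRegs, List.mem_singleton, if_true, Option.some.injEq] at hval
    rwa [hDB _ _ hv (hπ.lt_of_mem_nodes hWF hw) hval]
  · intro h lam hlam hne
    rcases validAsg_one_iff.1 hlam with rfl | ⟨v, hv, rfl⟩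
    · exact absurd rfl hne
    · exact ⟨v, h v hv, by simp [setRegs]⟩

end Hamiltonicity

/-- Over graph databases with alphabet `Σ = {a}` (coded `a = 0`) and a
single register `r`, the RL sentence
`∃π (∀λ ∀λ' ¬e₁(π,λ,λ') ∧ ∀λ (λ ≠ ⊥̄ → e₂(π,λ,λ)))`, with
`e₁ = a*·(↓r. a⁺[r^=])·a*` and `e₂ = a*[r^=]·a*`, holds in a graph database `G` iff `G`
has a Hamiltonian path.  Hence Hamiltonicity is expressible in RL. -/
theorem rl_expresses_hamiltonicity :
    ∀ G : DataGraph, G.WF 1 → G.IsDB →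
      (RL.holds G 1
        (RL.exPath 0 (RL.and
          (RL.allReg 0 (RL.allReg 1 (RL.not
            (RL.rem (REM.concat (REM.star (REM.lab 0))
                (REM.concat
                  (REM.store [0] (REM.test (REM.plus (REM.lab 0)) (RCond.eq 0)))
                  (REM.star (REM.lab 0))))
              0 (RegTerm.var 0) (RegTerm.var 1)))))
          (RL.allReg 0 (RL.imp (RL.not (RL.regEq (RegTerm.var 0) RegTerm.bot))
            (RL.rem (REM.concat (REM.test (REM.star (REM.lab 0)) (RCond.eq 0))
                (REM.star (REM.lab 0)))
              0 (RegTerm.var 0) (RegTerm.var 0)))))) ↔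
      HamPath G) := by
  intro G hWF hDB
  simp only [RL.holds, RL.Sat, RL.and, RL.allReg, RL.imp, RegTerm.interp, Function.update_self,
    Function.update_apply, zero_ne_one, if_false, not_or, not_not, not_exists, not_and]
  exact exists_congr fun π => and_congr_right fun hπ =>
    and_congr (forall_not_remSem_revisit_iff hWF hDB hπ) (forall_remSem_visit_iff hWF hDB hπ)
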